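/- For every n ≥ 6, the quantity C_{P,2̄,n} satisfies the pure recurrence C_{P,2̄,n} = C_{P,2̄,n−1} + C_{P,2̄,n−3} + C_{P,2̄,n−4} + C_{P,2̄,n−5}. -/

import Mathlib

/-- A Roman dominating function: every vertex with value 0 has a neighbor with value 2. -/
def IsRDF {V : Type*} (G : SimpleGraph V) (f : V → Fin 3) : Prop :=
  ∀ v, f v = 0 → ∃ u, G.Adj v u ∧ f u = 2

/-- A minimal Roman dominating function: an rdf such that no rdf `g ≠ f` satisfies `g ≤ f`. -/
def IsMinimalRDF {V : Type*} (G : SimpleGraph V) (f : V → Fin 3) : Prop :=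
  IsRDF G f ∧ ∀ g : V → Fin 3, IsRDF G g → g ≤ f → g = f

/-- The number of minimal Roman dominating functions of `G`. -/
noncomputable def numMinRDF {V : Type*} (G : SimpleGraph V) : ℕ :=
  {f : V → Fin 3 | IsMinimalRDF G f}.ncard

/-- `C_{P,n}`: the number of minimal Roman dominating functions of the path `Pₙ`. -/
noncomputable def CP (n : ℕ) : ℕ := numMinRDF (SimpleGraph.pathGraph n)

/-- `C_{P,2,n}`: the number of minimal rdf `f` of `Pₙ` with `f(v₁) = 2`. -/
noncomputable def CP2 (n : ℕ) : ℕ :=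
  {f : Fin n → Fin 3 | IsMinimalRDF (SimpleGraph.pathGraph n) f ∧
    ∃ h : 0 < n, f ⟨0, h⟩ = 2}.ncard

/-- `C_{P,2̄,n}`: the number of minimal rdf `f` of `Pₙ` with `f(v₁) ≠ 2`. -/
noncomputable def CPbar2 (n : ℕ) : ℕ :=
  {f : Fin n → Fin 3 | IsMinimalRDF (SimpleGraph.pathGraph n) f ∧
    ∀ h : 0 < n, f ⟨0, h⟩ ≠ 2}.ncard

/-!
On a path, minimality of a Roman dominating function is local: by `isMinimalRDF_iff`, every `0`
needs a neighbouring `2`, no `1` may have a neighbouring `2`, and every `2` needs a neighbouring `0`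
whose other neighbour is not `2`. Reading the labels as a word, these are conditions on windows of
radius 2. So putting one of the blocks `1`, `020`, `0220`, `02020` in front of a word whose first
letter is not `2` preserves validity in both directions, and every valid word of length at least 5
begins with exactly one of these blocks, followed by a word not starting with `2`. Counting by the
first block gives the recurrence.
-/

section RomanDomination

variable {V : Type*} {G : SimpleGraph V} {f : V → Fin 3}

theorem IsRDF.update_of_ne_two [DecidableEq V] (hf : IsRDF G f) {v : V} (hv : f v ≠ 2) {a : Fin 3}
    (ha : a = 0 → ∃ u, G.Adj v u ∧ f u = 2) : IsRDF G (Function.update f v a) := by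
  have keep : ∀ u, f u = 2 → Function.update f v a u = 2 := fun u hu => by
    rwa [Function.update_of_ne (by rintro rfl; exact hv hu)]
  intro w hw
  by_cases hwv : w = v
  · subst hwv
    obtain ⟨u, hadj, hu⟩ := ha (by simpa using hw)
    exact ⟨u, hadj, keep u hu⟩
  · obtain ⟨u, hadj, hu⟩ := hf w (by rwa [Function.update_of_ne hwv] at hw)
    exact ⟨u, hadj, keep u hu⟩

theorem IsRDF.update_one [DecidableEq V] (hf : IsRDF G f) {v : V}
    (h : ∀ u, G.Adj v u → f u = 0 → ∃ w, G.Adj u w ∧ w ≠ v ∧ f w = 2) :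
    IsRDF G (Function.update f v 1) := by
  intro u hu
  have huv : u ≠ v := by rintro rfl; simp at hu
  rw [Function.update_of_ne huv] at hu
  obtain ⟨w, hadj, hw⟩ := hf u hu
  by_cases hwv : w = v
  · subst hwv
    obtain ⟨w', hadj', hw'v, hw'⟩ := h u (G.adj_symm hadj) hu
    exact ⟨w', hadj', by rwa [Function.update_of_ne hw'v]⟩
  · exact ⟨w, hadj, by rwa [Function.update_of_ne hwv]⟩

theorem isMinimalRDF_iff :
    IsMinimalRDF G f ↔ IsRDF G f ∧
      (∀ v, f v = 1 → ∀ u, G.Adj v u → f u ≠ 2) ∧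
      (∀ v, f v = 2 → ∃ u, G.Adj v u ∧ f u = 0 ∧ ∀ w, G.Adj u w → w ≠ v → f w ≠ 2) := by
  classical
  constructor
  · rintro ⟨hf, hmin⟩
    have stuck : ∀ v a, a < f v → ¬ IsRDF G (Function.update f v a) := fun v a ha hg => by
      have := congr_fun (hmin _ hg (update_le_self_iff.2 ha.le)) v
      simp [ha.ne] at this
    refine ⟨hf, fun v hv u hadj hu => stuck v 0 (by simp [hv]) ?_, fun v hv => ?_⟩
    · exact hf.update_of_ne_two (by simp [hv]) fun _ => ⟨u, hadj, hu⟩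
    · by_contra! hpriv
      exact stuck v 1 (by simp [hv]) (hf.update_one hpriv)
  · rintro ⟨hf, hone, htwo⟩
    refine ⟨hf, fun g hg hgf => funext fun v => ?_⟩
    have zero_of : ∀ u, f u = 0 → g u = 0 := fun u hu => by have : g u ≤ f u := hgf u; omega
    have two_of : ∀ u, g u = 2 → f u = 2 := fun u hu => by have : g u ≤ f u := hgf u; omega
    by_contra hne
    have hlt : g v < f v := lt_of_le_of_ne (hgf v) hne
    rcases (show f v = 1 ∨ f v = 2 by omega) with hv | hv
    · obtain ⟨u, hadj, hu⟩ := hg v (by rw [hv] at hlt; omega)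
      exact hone v hv u hadj (two_of u hu)
    · obtain ⟨u, hadj, hu, hpriv⟩ := htwo v hv
      obtain ⟨w, hadj', hw⟩ := hg u (zero_of u hu)
      by_cases hwv : w = v
      · subst hwv; exact hlt.ne (hw.trans hv.symm)
      · exact hpriv w hadj' hwv (two_of w hw)

end RomanDomination

/-- The word `l` padded with missing vertices (`none`) on both sides; the letter at position `j`
sits in cell `j + 2`, so that windows of radius 2 never need truncated subtraction. -/
def pathCell (l : List (Fin 3)) : ℕ → Option (Fin 3)
  | 0 => none
  | 1 => none
  | j + 2 => l[j]?

/-- The conditions of `isMinimalRDF_iff` at a path vertex labelled `x`, whose neighbours at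
distance 1 and 2 are labelled `l₁, r₁` and `l₂, r₂` (`none` for a missing vertex). -/
def MinRDFWindow (l₂ l₁ x r₁ r₂ : Option (Fin 3)) : Prop :=
  (x = some 0 → l₁ = some 2 ∨ r₁ = some 2) ∧
  (x = some 1 → l₁ ≠ some 2 ∧ r₁ ≠ some 2) ∧
  (x = some 2 → l₁ = some 0 ∧ l₂ ≠ some 2 ∨ r₁ = some 0 ∧ r₂ ≠ some 2)

instance (l₂ l₁ x r₁ r₂ : Option (Fin 3)) : Decidable (MinRDFWindow l₂ l₁ x r₁ r₂) :=
  inferInstanceAs (Decidable (_ ∧ _ ∧ _))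

def MinRDFWindowAt (l : List (Fin 3)) (j : ℕ) : Prop :=
  MinRDFWindow (pathCell l j) (pathCell l (j + 1)) (pathCell l (j + 2)) (pathCell l (j + 3))
    (pathCell l (j + 4))

theorem minRDFWindow_none (l₂ l₁ r₁ r₂ : Option (Fin 3)) : MinRDFWindow l₂ l₁ none r₁ r₂ := by
  simp [MinRDFWindow]

def IsMinRDFWord (l : List (Fin 3)) : Prop :=
  l.head? ≠ some 2 ∧ ∀ j, MinRDFWindowAt l j

/-- The windows of a word centred at its first two positions, together with its first letter not
being `2`, in terms of the first four cells. -/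
def MinRDFFront (a b c d : Option (Fin 3)) : Prop :=
  a ≠ some 2 ∧ MinRDFWindow none none a b c ∧ MinRDFWindow none a b c d

instance (a b c d : Option (Fin 3)) : Decidable (MinRDFFront a b c d) :=
  inferInstanceAs (Decidable (_ ∧ _ ∧ _))

theorem isMinRDFWord_iff_front (l : List (Fin 3)) :
    IsMinRDFWord l ↔ MinRDFFront l[0]? l[1]? l[2]? l[3]? ∧ ∀ j, MinRDFWindowAt l (j + 2) := by
  rw [IsMinRDFWord, ← Nat.and_forall_add_one, ← Nat.and_forall_add_one, List.head?_eq_getElem?]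
  simp only [MinRDFFront, and_assoc]
  rfl

theorem forall_minRDFWindowAt_cons_iff (a : Fin 3) (l : List (Fin 3)) :
    (∀ j, MinRDFWindowAt (a :: l) (j + 2)) ↔
      MinRDFWindow (some a) l[0]? l[1]? l[2]? l[3]? ∧ ∀ j, MinRDFWindowAt l (j + 2) := by
  rw [← Nat.and_forall_add_one]
  rfl

theorem isMinRDFWord_cons_iff (a : Fin 3) (l : List (Fin 3)) :
    IsMinRDFWord (a :: l) ↔ (MinRDFFront (some a) l[0]? l[1]? l[2]? ∧
      MinRDFWindow (some a) l[0]? l[1]? l[2]? l[3]?) ∧ ∀ j, MinRDFWindowAt l (j + 2) := by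
  rw [isMinRDFWord_iff_front, forall_minRDFWindowAt_cons_iff, and_assoc]
  rfl

theorem isMinRDFWord_one_cons (t : List (Fin 3)) : IsMinRDFWord (1 :: t) ↔ IsMinRDFWord t := by
  rw [isMinRDFWord_cons_iff, isMinRDFWord_iff_front]
  refine and_congr_left' ?_
  generalize t[0]? = a, t[1]? = b, t[2]? = c, t[3]? = d
  revert a b c d; decide

theorem isMinRDFWord_020_append {t : List (Fin 3)} (ht : t.head? ≠ some 2) :
    IsMinRDFWord ([0, 2, 0] ++ t) ↔ IsMinRDFWord t := by
  simp only [List.cons_append, List.nil_append, isMinRDFWord_cons_iff,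
    forall_minRDFWindowAt_cons_iff, List.getElem?_cons_zero, List.getElem?_cons_succ,
    isMinRDFWord_iff_front t, and_assoc]
  simp only [← and_assoc]
  refine and_congr_left' ?_
  rw [List.head?_eq_getElem?] at ht
  generalize t[0]? = a, t[1]? = b, t[2]? = c, t[3]? = d at *
  revert a b c d; decide

theorem isMinRDFWord_0220_append (t : List (Fin 3)) :
    IsMinRDFWord ([0, 2, 2, 0] ++ t) ↔ IsMinRDFWord t := by
  simp only [List.cons_append, List.nil_append, isMinRDFWord_cons_iff,
    forall_minRDFWindowAt_cons_iff, List.getElem?_cons_zero, List.getElem?_cons_succ,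
    isMinRDFWord_iff_front t, and_assoc]
  simp only [← and_assoc]
  refine and_congr_left' ?_
  generalize t[0]? = a, t[1]? = b, t[2]? = c, t[3]? = d
  revert a b c d; decide

theorem isMinRDFWord_02020_append (t : List (Fin 3)) :
    IsMinRDFWord ([0, 2, 0, 2, 0] ++ t) ↔ IsMinRDFWord t := by
  simp only [List.cons_append, List.nil_append, isMinRDFWord_cons_iff,
    forall_minRDFWindowAt_cons_iff, List.getElem?_cons_zero, List.getElem?_cons_succ,
    isMinRDFWord_iff_front t, and_assoc]
  simp only [← and_assoc]
  refine and_congr_left' ?_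
  generalize t[0]? = a, t[1]? = b, t[2]? = c, t[3]? = d
  revert a b c d; decide

theorem IsMinRDFWord.prefix_cases (a b c d e : Fin 3) {t : List (Fin 3)}
    (h : IsMinRDFWord (a :: b :: c :: d :: e :: t)) :
    a = 1 ∨ (a = 0 ∧ b = 2 ∧ c = 0 ∧ d ≠ 2) ∨ (a = 0 ∧ b = 2 ∧ c = 2 ∧ d = 0) ∨
      (a = 0 ∧ b = 2 ∧ c = 0 ∧ d = 2 ∧ e = 0) := by
  simp only [isMinRDFWord_cons_iff, forall_minRDFWindowAt_cons_iff, List.getElem?_cons_zero,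
    List.getElem?_cons_succ] at h
  obtain ⟨⟨hfront, hwin⟩, hwin', -⟩ := h
  revert hfront hwin hwin'
  generalize t[0]? = x
  revert a b c d e x
  set_option synthInstance.maxSize 512 in decide

section PathWord

variable {n : ℕ} (f : Fin n → Fin 3)

theorem pathCell_ofFn_eq_some {j : ℕ} {a : Fin 3} :
    pathCell (List.ofFn f) j = some a ↔ ∃ u : Fin n, u.val + 2 = j ∧ f u = a := by
  match j with
  | 0 | 1 => simp [pathCell]
  | j + 2 =>
    simp only [pathCell, List.getElem?_ofFn, Nat.add_right_cancel_iff]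
    constructor
    · intro h
      split at h
      · exact ⟨_, rfl, Option.some_inj.1 h⟩
      · simp at h
    · rintro ⟨u, rfl, rfl⟩
      simp

theorem pathCell_ofFn_val_add_two (v : Fin n) : pathCell (List.ofFn f) (v + 2) = some (f v) := by
  simp [pathCell]

theorem exists_pathGraph_adj_iff (v : Fin n) (P : Fin n → Prop) :
    (∃ u, (SimpleGraph.pathGraph n).Adj v u ∧ P u) ↔
      (∃ u : Fin n, u.val + 1 = v ∧ P u) ∨ ∃ u : Fin n, u.val = v + 1 ∧ P u := by
  simp only [SimpleGraph.pathGraph_adj, or_and_right, exists_or, or_comm, eq_comm (a := v.val + 1)]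

theorem exists_pathGraph_adj_eq_iff (v : Fin n) (a : Fin 3) :
    (∃ u, (SimpleGraph.pathGraph n).Adj v u ∧ f u = a) ↔
      pathCell (List.ofFn f) (v + 1) = some a ∨ pathCell (List.ofFn f) (v + 3) = some a := by
  simp [exists_pathGraph_adj_iff, pathCell_ofFn_eq_some]

theorem pathGraph_adj_and_ne_iff {u v w : Fin n} (huv : (SimpleGraph.pathGraph n).Adj u v) :
    (SimpleGraph.pathGraph n).Adj u w ∧ w ≠ v ↔ w.val + v = 2 * u := by
  rw [SimpleGraph.pathGraph_adj] at huv ⊢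
  rw [Fin.ne_iff_vne]
  omega

theorem exists_pathGraph_adj_private_iff (v : Fin n) :
    (∃ u, (SimpleGraph.pathGraph n).Adj v u ∧ f u = 0 ∧
        ∀ w, (SimpleGraph.pathGraph n).Adj u w → w ≠ v → f w ≠ 2) ↔
      pathCell (List.ofFn f) (v + 1) = some 0 ∧ pathCell (List.ofFn f) v ≠ some 2 ∨
        pathCell (List.ofFn f) (v + 3) = some 0 ∧ pathCell (List.ofFn f) (v + 4) ≠ some 2 := by
  have other_side : ∀ u, (SimpleGraph.pathGraph n).Adj v u →
      ((∀ w, (SimpleGraph.pathGraph n).Adj u w → w ≠ v → f w ≠ 2) ↔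
        ∀ w : Fin n, w.val + v = 2 * u → f w ≠ 2) := fun u huv => by
    simp only [← pathGraph_adj_and_ne_iff huv.symm, and_imp]
  rw [exists_congr fun u => and_congr_right fun huv => and_congr_right' (other_side u huv),
    exists_pathGraph_adj_iff]
  simp only [pathCell_ofFn_eq_some, ne_eq, not_exists, not_and]
  constructor
  · rintro (⟨u, hu, h0, h⟩ | ⟨u, hu, h0, h⟩)
    · exact Or.inl ⟨⟨u, by omega, h0⟩, fun w hw => h w (by omega)⟩
    · exact Or.inr ⟨⟨u, by omega, h0⟩, fun w hw => h w (by omega)⟩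
  · rintro (⟨⟨u, hu, h0⟩, h⟩ | ⟨⟨u, hu, h0⟩, h⟩)
    · exact Or.inl ⟨u, by omega, h0, fun w hw => h w (by omega)⟩
    · exact Or.inr ⟨u, by omega, h0, fun w hw => h w (by omega)⟩

theorem minRDFWindowAt_ofFn_iff (v : Fin n) :
    MinRDFWindowAt (List.ofFn f) v ↔
      (f v = 0 → ∃ u, (SimpleGraph.pathGraph n).Adj v u ∧ f u = 2) ∧
      (f v = 1 → ∀ u, (SimpleGraph.pathGraph n).Adj v u → f u ≠ 2) ∧
      (f v = 2 → ∃ u, (SimpleGraph.pathGraph n).Adj v u ∧ f u = 0 ∧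
        ∀ w, (SimpleGraph.pathGraph n).Adj u w → w ≠ v → f w ≠ 2) := by
  have no_two : (∀ u, (SimpleGraph.pathGraph n).Adj v u → f u ≠ 2) ↔
      pathCell (List.ofFn f) (v + 1) ≠ some 2 ∧ pathCell (List.ofFn f) (v + 3) ≠ some 2 := by
    rw [← not_or, ← exists_pathGraph_adj_eq_iff]
    simp
  simp only [MinRDFWindowAt, MinRDFWindow, pathCell_ofFn_val_add_two, Option.some_inj,
    exists_pathGraph_adj_eq_iff, exists_pathGraph_adj_private_iff, no_two]

theorem isMinRDFWord_ofFn_iff :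
    IsMinRDFWord (List.ofFn f) ↔
      IsMinimalRDF (SimpleGraph.pathGraph n) f ∧ ∀ h : 0 < n, f ⟨0, h⟩ ≠ 2 := by
  have windows : (∀ j, MinRDFWindowAt (List.ofFn f) j) ↔
      ∀ v : Fin n, MinRDFWindowAt (List.ofFn f) v := by
    refine ⟨fun h v => h v, fun h j => ?_⟩
    by_cases hj : j < n
    · exact h ⟨j, hj⟩
    · have : pathCell (List.ofFn f) (j + 2) = none := by simp [pathCell, hj]
      rw [MinRDFWindowAt, this]
      exact minRDFWindow_none ..
  have head : (List.ofFn f).head? ≠ some 2 ↔ ∀ h : 0 < n, f ⟨0, h⟩ ≠ 2 := by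
    rw [List.head?_eq_getElem?, List.getElem?_ofFn]
    split <;> simp_all
  rw [IsMinRDFWord, windows, head, isMinimalRDF_iff, IsRDF]
  simp only [minRDFWindowAt_ofFn_iff, forall_and]
  tauto

end PathWord

def minRDFWords (n : ℕ) : Set (List (Fin 3)) := {l | l.length = n ∧ IsMinRDFWord l}

theorem minRDFWords_finite (n : ℕ) : (minRDFWords n).Finite :=
  (List.finite_length_eq (Fin 3) n).subset fun _ hl => hl.1

theorem CPbar2_eq_ncard_minRDFWords (n : ℕ) : CPbar2 n = (minRDFWords n).ncard := by
  have : minRDFWords n = List.ofFn '' {f : Fin n → Fin 3 |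
      IsMinimalRDF (SimpleGraph.pathGraph n) f ∧ ∀ h : 0 < n, f ⟨0, h⟩ ≠ 2} := by
    ext l
    simp only [minRDFWords, Set.mem_ofPred_eq, Set.mem_image, ← isMinRDFWord_ofFn_iff]
    constructor
    · rintro ⟨rfl, hl⟩
      exact ⟨_, by rwa [List.ofFn_getElem], List.ofFn_getElem⟩
    · rintro ⟨f, hf, rfl⟩
      exact ⟨List.length_ofFn, hf⟩
  rw [CPbar2, this, Set.ncard_image_of_injective _ List.ofFn_injective]

theorem minRDFWords_add_five (n : ℕ) :
    minRDFWords (n + 5) =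
      List.cons 1 '' minRDFWords (n + 4) ∪ ([0, 2, 0] ++ ·) '' minRDFWords (n + 2) ∪
        ([0, 2, 2, 0] ++ ·) '' minRDFWords (n + 1) ∪ ([0, 2, 0, 2, 0] ++ ·) '' minRDFWords n := by
  ext l
  simp only [minRDFWords, Set.mem_union, Set.mem_image, Set.mem_ofPred_eq]
  constructor
  · rintro ⟨hlen, hl⟩
    match l, hlen with
    | a :: b :: c :: d :: e :: t, hlen =>
      simp only [List.length_cons, Nat.add_right_cancel_iff] at hlen
      rcases hl.prefix_cases a b c d e with rfl | ⟨rfl, rfl, rfl, hd⟩ | ⟨rfl, rfl, rfl, rfl⟩ |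
        ⟨rfl, rfl, rfl, rfl, rfl⟩
      · exact .inl (.inl (.inl ⟨_, ⟨by simp [hlen], (isMinRDFWord_one_cons _).1 hl⟩, rfl⟩))
      · exact .inl (.inl (.inr ⟨d :: e :: t, ⟨by simp [hlen],
          (isMinRDFWord_020_append (by simpa using hd)).1 hl⟩, rfl⟩))
      · exact .inl (.inr ⟨e :: t, ⟨by simp [hlen], (isMinRDFWord_0220_append _).1 hl⟩, rfl⟩)
      · exact .inr ⟨t, ⟨hlen, (isMinRDFWord_02020_append _).1 hl⟩, rfl⟩
  · rintro (((⟨t, ⟨ht, hv⟩, rfl⟩ | ⟨t, ⟨ht, hv⟩, rfl⟩) | ⟨t, ⟨ht, hv⟩, rfl⟩) | ⟨t, ⟨ht, hv⟩, rfl⟩)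
    · exact ⟨by simp [ht], (isMinRDFWord_one_cons t).2 hv⟩
    · exact ⟨by simp [ht], (isMinRDFWord_020_append hv.1).2 hv⟩
    · exact ⟨by simp [ht], (isMinRDFWord_0220_append t).2 hv⟩
    · exact ⟨by simp [ht], (isMinRDFWord_02020_append t).2 hv⟩

theorem ncard_minRDFWords_add_five (n : ℕ) :
    (minRDFWords (n + 5)).ncard = (minRDFWords (n + 4)).ncard + (minRDFWords (n + 2)).ncard +
      (minRDFWords (n + 1)).ncard + (minRDFWords n).ncard := by
  have fin (g : List (Fin 3) → List (Fin 3)) (k : ℕ) : (g '' minRDFWords k).Finite :=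
    (minRDFWords_finite k).image g
  rw [minRDFWords_add_five,
    Set.ncard_union_eq _ (((fin _ _).union (fin _ _)).union (fin _ _)) (fin _ _),
    Set.ncard_union_eq _ ((fin _ _).union (fin _ _)) (fin _ _),
    Set.ncard_union_eq _ (fin _ _) (fin _ _)]
  · simp only [Set.ncard_image_of_injective _ List.cons_injective,
      Set.ncard_image_of_injective _ (List.append_right_injective _)]
  all_goals rw [Set.disjoint_left]
  · rintro _ ⟨t, -, rfl⟩ ⟨t', -, h⟩
    simp at h
  · rintro _ (⟨t, -, rfl⟩ | ⟨t, -, rfl⟩) ⟨t', -, h⟩ <;> simp at h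
  · rintro _ ((⟨t, -, rfl⟩ | ⟨t, ⟨-, ht⟩, rfl⟩) | ⟨t, -, rfl⟩) ⟨t', -, h⟩ <;> simp at h
    -- `02020 ++ t'` is `020 ++ (2 :: _)`, but a block is never followed by a `2`
    subst h
    simp [IsMinRDFWord] at ht

/-- For `n ≥ 6`, the pure recurrence
`C_{P,2̄,n} = C_{P,2̄,n-1} + C_{P,2̄,n-3} + C_{P,2̄,n-4} + C_{P,2̄,n-5}` holds. -/
theorem CPbar2_pure_recurrence (n : ℕ) (hn : 6 ≤ n) :
    CPbar2 n = CPbar2 (n - 1) + CPbar2 (n - 3) + CPbar2 (n - 4) + CPbar2 (n - 5) := by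
  obtain ⟨m, rfl⟩ : ∃ m, n = m + 5 := ⟨n - 5, by omega⟩
  simp only [CPbar2_eq_ncard_minRDFWords]
  exact ncard_minRDFWords_add_five m
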